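/- Suppose two token-level models M₁ and M₁′ over possibly different token vocabularies induce the same distribution over character strings: for all prompts l and strings z, P_{M₁}(z|l) = P_{M₁′}(z|l), where P_M(z|l) = ∑ over tokenizations (t₁,…,t_k) of z of ∏_i P_M(t_i | l·t₁⋯t_{i-1}). Then for any fixed second model M₂ and weight α ∈ [0,1], the CharED ensemble of (M₁, M₂) and of (M₁′, M₂) induce the same distribution over output strings: P_{CharED(M₁,M₂,α)}(z|l) = P_{CharED(M₁′,M₂,α)}(z|l) for all z, l. -/

import Mathlib

variable {A : Type*} [DecidableEq A]

/-- Marginal probability that the next character is `c`, under table `d` supported on `T`. -/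
noncomputable def margP (T : Finset (List A)) (d : List A → ℝ) (c : A) : ℝ :=
  ∑ t ∈ T.filter (fun t => t.head? = some c), d t

/-- Prune the table to entries starting with `c` and strip the first character. -/
def stepT (T : Finset (List A)) (c : A) : Finset (List A) :=
  (T.filter (fun t => t.head? = some c)).image List.tail

/-- The renormalized table after conditioning on first character `c` and stripping it. -/
noncomputable def stepD (T : Finset (List A)) (d : List A → ℝ) (c : A) : List A → ℝ :=
  fun s => (∑ t ∈ T.filter (fun t => t.head? = some c ∧ t.tail = s), d t) / margP T d c

/-- Remove the end-of-token entry (the empty string) and renormalize. -/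
noncomputable def eotStrip (d : List A → ℝ) : List A → ℝ :=
  fun s => if s = [] then 0 else d s / (1 - d [])

/-- Fuel-indexed token-level string probability: sum over tokenizations `(t₁,…,t_k)` of
`z` of `∏ᵢ M (l·t₁⋯t_{i-1}) tᵢ`. -/
noncomputable def strA (M : List A → List A → ℝ) : ℕ → List A → List A → ℝ
  | 0, _, z => if z = [] then 1 else 0
  | n + 1, l, z =>
    if z = [] then 1
    else ∑ k ∈ Finset.range z.length,
      M l (z.take (k + 1)) * strA M n (l ++ z.take (k + 1)) (z.drop (k + 1))

/-- `P_M(z | l)`: probability that token-level generation from `M` with prompt `l`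
produces the character string `z`. -/
noncomputable def strProb (M : List A → List A → ℝ) (l z : List A) : ℝ :=
  strA M z.length l z

/-- One-model-per-slot CharED process: `ced M₁ M₂ tok₁ tok₂ α l₁ l₂ g T₁ d₁ T₂ d₂ z` is
the probability that CharED, having already emitted `g` and with current (EOT-free)
lookup tables `d₁` on `T₁` and `d₂` on `T₂`, next emits exactly the characters of `z`.
At each step the character is drawn from `J = α·P₁ + (1-α)·P₂`, both tables are pruned,
stripped and renormalized, and then each model independently samples end-of-token
(probability `dᵢ' []`), refreshing its table from the model on the updated prompt if so,
and otherwise removing the EOT entry and renormalizing. -/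
noncomputable def ced (M₁ M₂ : List A → List A → ℝ)
    (tok₁ tok₂ : List A → Finset (List A)) (α : ℝ) (l₁ l₂ : List A) :
    List A → Finset (List A) → (List A → ℝ) → Finset (List A) → (List A → ℝ) →
      List A → ℝ
  | _, _, _, _, _, [] => 1
  | g, T₁, d₁, T₂, d₂, c :: z =>
    (α * margP T₁ d₁ c + (1 - α) * margP T₂ d₂ c) *
    (let g' := g ++ [c]
     let T₁' := stepT T₁ c; let d₁' := stepD T₁ d₁ c
     let T₂' := stepT T₂ c; let d₂' := stepD T₂ d₂ c
     let ε₁ := d₁' []; let ε₂ := d₂' []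
     ε₁ * ε₂ *
        ced M₁ M₂ tok₁ tok₂ α l₁ l₂ g' (tok₁ (l₁ ++ g')) (M₁ (l₁ ++ g'))
          (tok₂ (l₂ ++ g')) (M₂ (l₂ ++ g')) z +
     ε₁ * (1 - ε₂) *
        ced M₁ M₂ tok₁ tok₂ α l₁ l₂ g' (tok₁ (l₁ ++ g')) (M₁ (l₁ ++ g'))
          T₂' (eotStrip d₂') z +
     (1 - ε₁) * ε₂ *
        ced M₁ M₂ tok₁ tok₂ α l₁ l₂ g' T₁' (eotStrip d₁')
          (tok₂ (l₂ ++ g')) (M₂ (l₂ ++ g')) z +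
     (1 - ε₁) * (1 - ε₂) *
        ced M₁ M₂ tok₁ tok₂ α l₁ l₂ g' T₁' (eotStrip d₁') T₂' (eotStrip d₂') z)

/-- Probability that CharED on `(M₁, M₂)` with weight `α` and prompts `l₁, l₂`, starting
from freshly queried tables, emits the character string `z` (as the first `|z|` output
characters). -/
noncomputable def cedProb (M₁ M₂ : List A → List A → ℝ)
    (tok₁ tok₂ : List A → Finset (List A)) (α : ℝ) (l₁ l₂ z : List A) : ℝ :=
  ced M₁ M₂ tok₁ tok₂ α l₁ l₂ [] (tok₁ l₁) (M₁ l₁) (tok₂ l₂) (M₂ l₂) z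

/-!
Equal string distributions force equal next-token tables: splitting off the first token,
`P_M(t | l) = M l t + ∑ M l t' · P_M(t'' | l ++ t')` over the proper splits `t = t' ++ t''`,
so by induction on `|t|` the value `M l t` is read off from string probabilities. CharED
sees a vocabulary only as the index set of sums whose terms vanish off the support of the
model, so once the models agree the vocabularies cannot be told apart.
-/

section StringProbability

variable {α : Type*}

lemma strA_nil (M : List α → List α → ℝ) (n : ℕ) (l : List α) : strA M n l [] = 1 := by
  cases n <;> simp [strA]

lemma strA_congr_fuel (M : List α → List α → ℝ) {n m : ℕ} {l z : List α}
    (hn : z.length ≤ n) (hm : z.length ≤ m) : strA M n l z = strA M m l z := by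
  induction n generalizing m l z with
  | zero => rw [List.eq_nil_of_length_eq_zero (Nat.le_zero.mp hn), strA_nil, strA_nil]
  | succ n ih =>
    cases z with
    | nil => rw [strA_nil, strA_nil]
    | cons c w =>
      obtain ⟨m, rfl⟩ : ∃ m', m = m' + 1 := Nat.exists_eq_add_one.mpr (by simp at hm; omega)
      simp only [strA, if_neg (List.cons_ne_nil c w)]
      refine Finset.sum_congr rfl fun k hk => congrArg _ (ih ?_ ?_) <;>
        simp only [List.length_drop, List.length_cons] at hn hm ⊢ <;> omega

lemma strProb_eq_sum_add (M : List α → List α → ℝ) (l : List α) {z : List α} (hz : z ≠ []) :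
    strProb M l z =
      (∑ k ∈ Finset.range (z.length - 1),
        M l (z.take (k + 1)) * strProb M (l ++ z.take (k + 1)) (z.drop (k + 1))) + M l z := by
  obtain ⟨m, hm⟩ := Nat.exists_eq_add_one.mpr (List.length_pos_iff.mpr hz)
  rw [strProb, hm, strA, if_neg hz, hm, Finset.sum_range_succ, Nat.add_sub_cancel,
    ← hm, List.take_length, List.drop_length, strA_nil, mul_one]
  refine congrArg (· + M l z) (Finset.sum_congr rfl fun k hk => congrArg _ ?_)
  have hk := Finset.mem_range.mp hk
  exact strA_congr_fuel M (by rw [List.length_drop]; omega) le_rfl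

theorem eq_of_strProb_eq {M M' : List α → List α → ℝ} (hnil : ∀ l, M l [] = M' l [])
    (h : ∀ l z, strProb M l z = strProb M' l z) : M = M' := by
  suffices key : ∀ n (l t : List α), t.length ≤ n → M l t = M' l t from
    funext fun l => funext fun t => key t.length l t le_rfl
  intro n
  induction n with
  | zero => intro l t ht; rw [List.eq_nil_of_length_eq_zero (Nat.le_zero.mp ht), hnil]
  | succ n ih =>
    intro l t ht
    rcases eq_or_ne t [] with rfl | hne
    · exact hnil l
    have hsplits : ∀ k ∈ Finset.range (t.length - 1),
        M l (t.take (k + 1)) * strProb M (l ++ t.take (k + 1)) (t.drop (k + 1)) =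
          M' l (t.take (k + 1)) * strProb M' (l ++ t.take (k + 1)) (t.drop (k + 1)) := by
      intro k hk
      have hk := Finset.mem_range.mp hk
      rw [ih _ _ (by rw [List.length_take]; omega), h]
    have := h l t
    rw [strProb_eq_sum_add M l hne, strProb_eq_sum_add M' l hne,
      Finset.sum_congr rfl hsplits] at this
    exact add_left_cancel this

end StringProbability

lemma margP_eq_of_subset {T T' : Finset (List A)} {d : List A → ℝ} (hsub : T ⊆ T')
    (hd : ∀ t ∈ T', t ∉ T → d t = 0) (c : A) : margP T d c = margP T' d c :=
  Finset.sum_subset (Finset.filter_subset_filter _ hsub) fun t ht htT =>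
    hd t (Finset.mem_of_mem_filter t ht) fun h => htT (Finset.mem_filter.mpr
      ⟨h, (Finset.mem_filter.mp ht).2⟩)

lemma margP_congr_support {T T' : Finset (List A)} {d : List A → ℝ}
    (hT : ∀ t ∉ T, d t = 0) (hT' : ∀ t ∉ T', d t = 0) (c : A) :
    margP T d c = margP T' d c :=
  (margP_eq_of_subset Finset.subset_union_left (fun t _ => hT t) c).trans
    (margP_eq_of_subset Finset.subset_union_right (fun t _ => hT' t) c).symm

lemma stepD_apply_of_support {T : Finset (List A)} {d : List A → ℝ}
    (hd : ∀ t ∉ T, d t = 0) (c : A) (s : List A) :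
    stepD T d c s = d (c :: s) / margP T d c := by
  have hcons : ∀ t : List A, (t.head? = some c ∧ t.tail = s) ↔ t = c :: s := by
    rintro (_ | ⟨a, w⟩) <;> simp [eq_comm]
  simp only [stepD, hcons, Finset.filter_eq', apply_ite (∑ t ∈ ·, d t),
    Finset.sum_singleton, Finset.sum_empty]
  split_ifs with h
  · rfl
  · rw [hd _ h]

lemma eotStrip_stepD_of_notMem_stepT {T : Finset (List A)} {d : List A → ℝ}
    (hd : ∀ t ∉ T, d t = 0) (c : A) {s : List A} (hs : s ∉ stepT T c) :
    eotStrip (stepD T d c) s = 0 := by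
  have hcs : c :: s ∉ T := fun h =>
    hs (Finset.mem_image.mpr ⟨c :: s, Finset.mem_filter.mpr ⟨h, rfl⟩, rfl⟩)
  simp [eotStrip, stepD_apply_of_support hd, hd _ hcs]

theorem ced_congr_vocab {M₁ M₂ : List A → List A → ℝ}
    {tok₁ tok₁' tok₂ : List A → Finset (List A)}
    (hsupp₁ : ∀ l t, t ∉ tok₁ l → M₁ l t = 0) (hsupp₁' : ∀ l t, t ∉ tok₁' l → M₁ l t = 0)
    (α : ℝ) (l₁ l₂ g : List A) {T T' : Finset (List A)} {d : List A → ℝ}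
    (hT : ∀ t ∉ T, d t = 0) (hT' : ∀ t ∉ T', d t = 0)
    (T₂ : Finset (List A)) (d₂ : List A → ℝ) (z : List A) :
    ced M₁ M₂ tok₁ tok₂ α l₁ l₂ g T d T₂ d₂ z = ced M₁ M₂ tok₁' tok₂ α l₁ l₂ g T' d T₂ d₂ z := by
  induction z generalizing g T T' d T₂ d₂ with
  | nil => rfl
  | cons c z ih =>
    have hmarg := margP_congr_support hT hT' c
    have hstep : stepD T d c = stepD T' d c := by
      funext s; rw [stepD_apply_of_support hT, stepD_apply_of_support hT', hmarg]
    have hrefresh := ih (g ++ [c]) (hsupp₁ (l₁ ++ (g ++ [c]))) (hsupp₁' (l₁ ++ (g ++ [c])))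
    have hcontinue := ih (g ++ [c]) (fun _ => eotStrip_stepD_of_notMem_stepT hT c)
      (fun _ => hstep ▸ eotStrip_stepD_of_notMem_stepT hT' c)
    simp only [ced, hmarg, ← hstep, hrefresh, hcontinue]

theorem tokenization_invariance_general {A : Type*} [DecidableEq A]
    (M₁ M₁' M₂ : List A → List A → ℝ)
    (tok₁ tok₁' tok₂ : List A → Finset (List A))
    (hne₁ : ∀ l, ∀ t ∈ tok₁ l, t ≠ [])
    (hsupp₁ : ∀ l t, t ∉ tok₁ l → M₁ l t = 0)
    (hne₁' : ∀ l, ∀ t ∈ tok₁' l, t ≠ [])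
    (hsupp₁' : ∀ l t, t ∉ tok₁' l → M₁' l t = 0)
    (α : ℝ)
    (heq : ∀ l z : List A, strProb M₁ l z = strProb M₁' l z) :
    ∀ l₁ l₂ z : List A,
      cedProb M₁ M₂ tok₁ tok₂ α l₁ l₂ z = cedProb M₁' M₂ tok₁' tok₂ α l₁ l₂ z := by
  have hnil : ∀ l, M₁ l [] = M₁' l [] := fun l => by
    rw [hsupp₁ l [] fun h => hne₁ l [] h rfl, hsupp₁' l [] fun h => hne₁' l [] h rfl]
  obtain rfl : M₁ = M₁' := eq_of_strProb_eq hnil heq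
  intro l₁ l₂ z
  exact ced_congr_vocab hsupp₁ hsupp₁' α l₁ l₂ [] (hsupp₁ l₁) (hsupp₁' l₁) _ _ z

/-- Tokenization Invariance: if `M₁` and `M₁'` (with possibly different
token vocabularies `tok₁`, `tok₁'`) induce the same distribution over character strings,
i.e. `P_{M₁}(z|l) = P_{M₁'}(z|l)` for all prompts `l` and strings `z`, then for any
second model `M₂` and weight `α ∈ [0,1]`, the CharED ensembles of `(M₁, M₂)` and of
`(M₁', M₂)` induce the same distribution over output strings. -/
theorem tokenization_invariance {A : Type*} [DecidableEq A]
    (M₁ M₁' M₂ : List A → List A → ℝ)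
    (tok₁ tok₁' tok₂ : List A → Finset (List A))
    (hne₁ : ∀ l, ∀ t ∈ tok₁ l, t ≠ []) (h0₁ : ∀ l t, 0 ≤ M₁ l t)
    (hsupp₁ : ∀ l t, t ∉ tok₁ l → M₁ l t = 0) (hsum₁ : ∀ l, ∑ t ∈ tok₁ l, M₁ l t = 1)
    (hne₁' : ∀ l, ∀ t ∈ tok₁' l, t ≠ []) (h0₁' : ∀ l t, 0 ≤ M₁' l t)
    (hsupp₁' : ∀ l t, t ∉ tok₁' l → M₁' l t = 0)
    (hsum₁' : ∀ l, ∑ t ∈ tok₁' l, M₁' l t = 1)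
    (hne₂ : ∀ l, ∀ t ∈ tok₂ l, t ≠ []) (h0₂ : ∀ l t, 0 ≤ M₂ l t)
    (hsupp₂ : ∀ l t, t ∉ tok₂ l → M₂ l t = 0) (hsum₂ : ∀ l, ∑ t ∈ tok₂ l, M₂ l t = 1)
    (α : ℝ) (hα : α ∈ Set.Icc (0 : ℝ) 1)
    (heq : ∀ l z : List A, strProb M₁ l z = strProb M₁' l z) :
    ∀ l₁ l₂ z : List A,
      cedProb M₁ M₂ tok₁ tok₂ α l₁ l₂ z = cedProb M₁' M₂ tok₁' tok₂ α l₁ l₂ z :=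
  tokenization_invariance_general M₁ M₁' M₂ tok₁ tok₁' tok₂ hne₁ hsupp₁ hne₁' hsupp₁' α heq
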